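/- Let B be a semisimple algebra with distinguished idempotents e₁,…,e_m such that e₁ + ⋯ + e_m is invertible (or more generally acts as identity in B̃), and let B̃ be the painted algebra. Then every simple B̃-module P is isomorphic to the painted module S̃ of some simple B-module S. -/

import Mathlib

open Finset

/-- Absorption: if `a` is idempotent and `a * x * b = x` then `a * x = x`. -/
theorem absorb_left {B : Type*} [Ring B] {a b x : B} (ha : a * a = a)
    (h : a * x * b = x) : a * x = x := by
  conv_lhs => rw [← h]
  rw [← mul_assoc, ← mul_assoc, ha, h]

theorem absorb_right {B : Type*} [Ring B] {a b x : B} (hb : b * b = b)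
    (h : a * x * b = x) : x * b = x := by
  conv_lhs => rw [← h]
  rw [mul_assoc (a * x) b b, hb, h]

/-- A family of distinguished idempotents in a ring `B`. -/
structure IdemFamily (B : Type*) [Ring B] (m : ℕ) where
  e : Fin m → B
  idem : ∀ i, e i * e i = e i

variable {B : Type*} [Ring B] {m : ℕ}

/-- The painted algebra `B̃ = ⊕_{i,j} e_i B e_j`, realized as the non-unital subring of
`m × m` matrices over `B` whose `(i,j)` entry lies in `e_i B e_j`.  Its multiplication
`(e_i b e_j)·(e_k b' e_ℓ) = δ_{jk} e_i b e_j b' e_ℓ` is exactly matrix multiplication. -/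
def paintedSubring (E : IdemFamily B m) : NonUnitalSubring (Matrix (Fin m) (Fin m) B) where
  carrier := {x | ∀ i j, E.e i * x i j * E.e j = x i j}
  zero_mem' := by intro i j; simp
  add_mem' := by
    intro x y hx hy i j
    have : (x + y) i j = x i j + y i j := rfl
    rw [this, mul_add, add_mul, hx i j, hy i j]
  neg_mem' := by
    intro x hx i j
    have : (-x) i j = -(x i j) := rfl
    rw [this, mul_neg, neg_mul, hx i j]
  mul_mem' := by
    intro x y hx hy i j
    show E.e i * (x * y) i j * E.e j = (x * y) i j
    simp only [Matrix.mul_apply, Finset.mul_sum, Finset.sum_mul]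
    refine Finset.sum_congr rfl fun l _ => ?_
    rw [← mul_assoc, absorb_left (E.idem i) (hx i l), mul_assoc,
      absorb_right (E.idem j) (hy l j)]

/-- The painted algebra associated to a family of idempotents. -/
def PaintedAlgebra (E : IdemFamily B m) : Type _ := ↥(paintedSubring E)

instance (E : IdemFamily B m) : NonUnitalRing (PaintedAlgebra E) :=
  inferInstanceAs (NonUnitalRing ↥(paintedSubring E))

/-- The painted algebra is a (unital) ring, with unit the diagonal matrix `diag(e₁,…,e_m)`. -/
instance (E : IdemFamily B m) : Ring (PaintedAlgebra E) :=
  { (inferInstance : NonUnitalRing (PaintedAlgebra E)) with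
    one := ⟨Matrix.diagonal E.e, by
      intro i j
      by_cases h : i = j
      · subst h; simp [Matrix.diagonal_apply_eq, E.idem i]
      · simp [Matrix.diagonal_apply_ne _ h]⟩
    one_mul := by
      intro x
      apply Subtype.ext
      ext i j
      show (Matrix.diagonal E.e * x.val) i j = x.val i j
      rw [Matrix.diagonal_mul]
      exact absorb_left (E.idem i) (x.prop i j)
    mul_one := by
      intro x
      apply Subtype.ext
      ext i j
      show (x.val * Matrix.diagonal E.e) i j = x.val i j
      rw [Matrix.mul_diagonal]
      exact absorb_right (E.idem j) (x.prop i j) }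
/-- The painted module `M̃ = ⊕_i e_i M`, realized as the additive subgroup of `Fin m → M`
consisting of tuples with `i`-th coordinate in `e_i M`. -/
def paintedSubgroup (E : IdemFamily B m) (M : Type*) [AddCommGroup M] [Module B M] :
    AddSubgroup (Fin m → M) where
  carrier := {v | ∀ i, E.e i • v i = v i}
  zero_mem' := by intro i; simp
  add_mem' := by
    intro v w hv hw i
    have : (v + w) i = v i + w i := rfl
    rw [this, smul_add, hv i, hw i]
  neg_mem' := by
    intro v hv i
    have : (-v) i = -(v i) := rfl
    rw [this, smul_neg, hv i]

/-- The painted module associated to a `B`-module `M`. -/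
def PaintedModule (E : IdemFamily B m) (M : Type*) [AddCommGroup M] [Module B M] : Type _ :=
  ↥(paintedSubgroup E M)

instance (E : IdemFamily B m) (M : Type*) [AddCommGroup M] [Module B M] :
    AddCommGroup (PaintedModule E M) :=
  inferInstanceAs (AddCommGroup ↥(paintedSubgroup E M))

instance (E : IdemFamily B m) (M : Type*) [AddCommGroup M] [Module B M] :
    SMul (PaintedAlgebra E) (PaintedModule E M) where
  smul x v := ⟨fun i => ∑ j, x.val i j • v.val j, by
    intro i
    rw [Finset.smul_sum]
    refine Finset.sum_congr rfl fun j _ => ?_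
    rw [← mul_smul, absorb_left (E.idem i) (x.prop i j)]⟩

theorem painted_smul_apply (E : IdemFamily B m) (M : Type*) [AddCommGroup M] [Module B M]
    (x : PaintedAlgebra E) (v : PaintedModule E M) (i : Fin m) :
    (x • v).val i = ∑ j, x.val i j • v.val j := rfl

/-- The painted module is a module over the painted algebra, with the action
`(e_i b e_j) • (e_k m) = δ_{jk} (e_i b e_j) • m`  (matrix–vector multiplication). -/
instance (E : IdemFamily B m) (M : Type*) [AddCommGroup M] [Module B M] :
    Module (PaintedAlgebra E) (PaintedModule E M) where
  one_smul v := by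
    apply Subtype.ext
    funext i
    rw [painted_smul_apply]
    show (∑ j, Matrix.diagonal E.e i j • v.val j) = v.val i
    rw [Finset.sum_eq_single i]
    · rw [Matrix.diagonal_apply_eq]; exact v.prop i
    · intro j _ hj
      rw [Matrix.diagonal_apply_ne _ (Ne.symm hj), zero_smul]
    · intro h; exact absurd (Finset.mem_univ i) h
  mul_smul x y v := by
    apply Subtype.ext
    funext i
    rw [painted_smul_apply]
    show (∑ j, (x.val * y.val) i j • v.val j) = ∑ j, x.val i j • (y • v).val j
    simp only [Matrix.mul_apply, painted_smul_apply, Finset.sum_smul, Finset.smul_sum,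
      mul_smul]
    exact Finset.sum_comm
  smul_zero x := by
    apply Subtype.ext
    funext i
    rw [painted_smul_apply]
    show (∑ j, x.val i j • (0 : Fin m → M) j) = (0 : Fin m → M) i
    simp
  smul_add x v w := by
    apply Subtype.ext
    funext i
    simp only [painted_smul_apply]
    show (∑ j, x.val i j • (v.val j + w.val j)) = _
    simp only [smul_add, Finset.sum_add_distrib]
    rfl
  add_smul x y v := by
    apply Subtype.ext
    funext i
    simp only [painted_smul_apply]
    show (∑ j, (x.val i j + y.val i j) • v.val j) = _
    simp only [add_smul, Finset.sum_add_distrib]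
    rfl
  zero_smul v := by
    apply Subtype.ext
    funext i
    rw [painted_smul_apply]
    show (∑ j, (0 : Matrix (Fin m) (Fin m) B) i j • v.val j) = 0
    simp

/-! Since `∑ⱼ col j (single j 1) = 1`, every nonzero `B̃`-module `P` receives a nonzero map from
the painted regular module `B̃_B`, through one of the column maps `col j : B̃_B → B̃` followed by
`x ↦ x • p`. As `B` is semisimple, `B̃_B` is generated by the painted modules `S̃` of the simple
left ideals `S ⊆ B`, so some `S̃ → P` is nonzero. A nonzero `S̃` is simple: a nonzero `v ∈ S̃` has
a coordinate `vᵢ` generating `S`, and a single column of `B̃` carries `v` to any `w ∈ S̃`. Schur's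
lemma then makes `S̃ → P` an isomorphism. -/

namespace PaintedAlgebra

variable {E : IdemFamily B m}

@[ext]
theorem ext {x y : PaintedAlgebra E} (h : ∀ i j, x.val i j = y.val i j) : x = y :=
  Subtype.ext (Matrix.ext h)

theorem sum_val {ι : Type*} (s : Finset ι) (x : ι → PaintedAlgebra E) :
    (∑ k ∈ s, x k).val = ∑ k ∈ s, (x k).val :=
  AddSubmonoidClass.coe_finsetSum _ _

theorem one_val : (1 : PaintedAlgebra E).val = Matrix.diagonal E.e := rfl

end PaintedAlgebra

namespace PaintedModule

variable {E : IdemFamily B m} {M N : Type*} [AddCommGroup M] [Module B M]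
  [AddCommGroup N] [Module B N]

@[ext]
theorem ext {v w : PaintedModule E M} (h : ∀ i, v.val i = w.val i) : v = w :=
  Subtype.ext (funext h)

theorem e_smul_val (v : PaintedModule E M) (i : Fin m) : E.e i • v.val i = v.val i :=
  v.prop i

theorem e_mul_val (v : PaintedModule E B) (i : Fin m) : E.e i * v.val i = v.val i :=
  v.prop i

variable (E) in
def ofFun : (Fin m → M) →+ PaintedModule E M where
  toFun f := ⟨fun i => E.e i • f i, fun i => by rw [smul_smul, E.idem]⟩
  map_zero' := ext fun _ => smul_zero _
  map_add' _ _ := ext fun _ => smul_add _ _ _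

theorem ofFun_val (f : Fin m → M) (i : Fin m) : (ofFun E f).val i = E.e i • f i := rfl

theorem ofFun_val_eq (v : PaintedModule E M) : ofFun E v.val = v :=
  ext fun i => e_smul_val v i

variable (E) in
def single (i : Fin m) : M →+ PaintedModule E M :=
  (ofFun E).comp (AddMonoidHom.single (fun _ => M) i)

theorem single_val (i : Fin m) (x : M) : (single E i x).val = Pi.single i (E.e i • x) :=
  funext fun l => Pi.apply_single (fun l => (E.e l • · : M → M)) (fun _ => smul_zero _) i x l

theorem sum_single_val (v : PaintedModule E M) : ∑ i, single E i (v.val i) = v := by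
  simp only [single, AddMonoidHom.comp_apply, AddMonoidHom.single_apply, ← map_sum,
    Finset.univ_sum_single, ofFun_val_eq]

variable (E) in
def map (f : M →ₗ[B] N) : PaintedModule E M →ₗ[PaintedAlgebra E] PaintedModule E N where
  toFun v := ⟨fun i => f (v.val i), fun i => by rw [← map_smul, e_smul_val]⟩
  map_add' _ _ := ext fun _ => map_add f _ _
  map_smul' x v := ext fun i => by
    simp only [RingHom.id_apply, painted_smul_apply, map_sum, map_smul]
    rfl

theorem map_ofFun (f : M →ₗ[B] N) (g : Fin m → M) :
    map E f (ofFun E g) = ofFun E (f ∘ g) :=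
  ext fun i => map_smul f (E.e i) (g i)

theorem map_single (f : M →ₗ[B] N) (i : Fin m) (x : M) :
    map E f (single E i x) = single E i (f x) := by
  simp only [single, AddMonoidHom.comp_apply, AddMonoidHom.single_apply, map_ofFun]
  rw [Pi.single_op (fun _ => f) (fun _ => map_zero f)]
  rfl

end PaintedModule

namespace PaintedAlgebra

open PaintedModule

variable (E : IdemFamily B m)

def col (j : Fin m) : PaintedModule E B →ₗ[PaintedAlgebra E] PaintedAlgebra E where
  toFun v := ⟨fun i l => if l = j then v.val i * E.e j else 0, fun i l => by
    dsimp only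
    split_ifs with h
    · rw [h, ← mul_assoc, e_mul_val, mul_assoc, E.idem]
    · rw [mul_zero, zero_mul]⟩
  map_add' v w := PaintedAlgebra.ext fun i l => by
    show (if l = j then (v + w).val i * E.e j else 0)
      = (if l = j then v.val i * E.e j else 0) + (if l = j then w.val i * E.e j else 0)
    split_ifs
    · exact add_mul _ _ _
    · exact (add_zero 0).symm
  map_smul' x v := PaintedAlgebra.ext fun i l => by
    show (if l = j then (x • v).val i * E.e j else 0)
      = ∑ k, x.val i k * (if l = j then v.val k * E.e j else 0)
    split_ifs
    · simp only [painted_smul_apply, smul_eq_mul, Finset.sum_mul, mul_assoc]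
    · simp

theorem col_val (j : Fin m) (v : PaintedModule E B) (i l : Fin m) :
    (col E j v).val i l = if l = j then v.val i * E.e j else 0 := rfl

theorem sum_col_single_one : ∑ j, col E j (single E j 1) = 1 := by
  ext i l
  rw [one_val, sum_val, Matrix.sum_apply]
  simp only [col_val, Finset.sum_ite_eq, Finset.mem_univ, if_true]
  rw [single_val, smul_eq_mul, mul_one, Pi.single_apply, Matrix.diagonal_apply]
  split_ifs with h
  · rw [h, E.idem]
  · exact zero_mul _

end PaintedAlgebra

namespace PaintedModule

open PaintedAlgebra

variable {E : IdemFamily B m} {M : Type*} [AddCommGroup M] [Module B M]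
  {P : Type*} [AddCommGroup P] [Module (PaintedAlgebra E) P]

theorem exists_isSimpleModule_comp_map_subtype_ne_zero [IsSemisimpleModule B M]
    {f : PaintedModule E M →ₗ[PaintedAlgebra E] P} (hf : f ≠ 0) :
    ∃ S : Submodule B M, IsSimpleModule B S ∧ f ∘ₗ map E S.subtype ≠ 0 := by
  contrapose! hf
  refine LinearMap.ext fun v => ?_
  rw [← sum_single_val v, map_sum, LinearMap.zero_apply]
  refine Finset.sum_eq_zero fun i _ => ?_
  have hv : v.val i ∈ (⊤ : Submodule B M) := trivial
  rw [← IsSemisimpleModule.sSup_simples_eq_top, sSup_eq_iSup'] at hv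
  refine Submodule.iSup_induction _ (motive := fun x => f (single E i x) = 0) hv ?_ ?_ ?_
  · intro S x hx
    have hS := congr($(hf S.1 S.2) (single E i ⟨x, hx⟩))
    rwa [LinearMap.comp_apply, map_single] at hS
  · rw [map_zero, map_zero]
  · intro x y hx hy
    rw [map_add, map_add, hx, hy, add_zero]

theorem exists_smul_eq_of_mem_span {v w : PaintedModule E M} {i : Fin m}
    (hw : ∀ j, w.val j ∈ Submodule.span B {v.val i}) : ∃ x : PaintedAlgebra E, x • v = w := by
  choose b hb using fun j => Submodule.mem_span_singleton.mp (hw j)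
  refine ⟨col E i (ofFun E b), ext fun j => ?_⟩
  simp only [painted_smul_apply, col_val, ite_smul, zero_smul, Finset.sum_ite_eq',
    Finset.mem_univ, if_true, ofFun_val, smul_eq_mul, mul_smul, e_smul_val, hb]

theorem isSimpleModule [IsSimpleModule B M] [Nontrivial (PaintedModule E M)] :
    IsSimpleModule (PaintedAlgebra E) (PaintedModule E M) := by
  refine isSimpleModule_iff_toSpanSingleton_surjective.mpr ⟨inferInstance, fun v hv w => ?_⟩
  obtain ⟨i, hi⟩ : ∃ i, v.val i ≠ 0 := by
    by_contra! h
    exact hv (ext h)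
  have hspan := IsSimpleModule.span_singleton_eq_top B hi
  exact exists_smul_eq_of_mem_span fun j => hspan ▸ Submodule.mem_top

variable (E P) in
theorem exists_linearMap_ne_zero [Nontrivial P] :
    ∃ f : PaintedModule E B →ₗ[PaintedAlgebra E] P, f ≠ 0 := by
  obtain ⟨p, hp⟩ := exists_ne (0 : P)
  by_contra! h
  apply hp
  calc p = (∑ j, col E j (single E j 1)) • p := by rw [sum_col_single_one, one_smul]
    _ = ∑ j, (LinearMap.toSpanSingleton _ P p ∘ₗ col E j) (single E j 1) := Finset.sum_smul ..
    _ = 0 := Finset.sum_eq_zero fun j _ => LinearMap.congr_fun (h _) _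

end PaintedModule

/-- Let `B` be a semisimple algebra with distinguished idempotents
`e₁,…,e_m` and painted algebra `B̃` (whose identity is the diagonal matrix
`diag(e₁,…,e_m)`, i.e. `e₁+⋯+e_m` viewed diagonally).  Then every simple `B̃`-module `P`
is isomorphic to the painted module `S̃` of some simple `B`-module `S`. -/
theorem stmt6 {B : Type} [Ring B] [IsSemisimpleRing B] {m : ℕ} (E : IdemFamily B m)
    (P : Type) [AddCommGroup P] [Module (PaintedAlgebra E) P]
    (hP : IsSimpleModule (PaintedAlgebra E) P) :
    ∃ (S : Type) (i1 : AddCommGroup S), by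
      letI := i1
      exact ∃ i2 : Module B S, by
        letI := i2
        exact IsSimpleModule B S ∧
          Nonempty (P ≃ₗ[PaintedAlgebra E] PaintedModule E S) := by
  have := IsSimpleModule.nontrivial (PaintedAlgebra E) P
  obtain ⟨f, hf⟩ := PaintedModule.exists_linearMap_ne_zero E P
  obtain ⟨S, hS, hfS⟩ := PaintedModule.exists_isSimpleModule_comp_map_subtype_ne_zero hf
  obtain ⟨v, hv⟩ := DFunLike.ne_iff.mp hfS
  have : Nontrivial (PaintedModule E S) :=
    nontrivial_of_ne v 0 fun h => hv (by rw [h, map_zero, LinearMap.zero_apply])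
  have := PaintedModule.isSimpleModule (E := E) (M := S)
  exact ⟨S, inferInstance, inferInstance, hS,
    ⟨(LinearEquiv.ofBijective _ (LinearMap.bijective_of_ne_zero hfS)).symm⟩⟩
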